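/- arXiv:2605.18433 — 2 statements merged into one kernel-verified Lean document; each statement's English description precedes it below -/
import Mathlib

section
/- Let A be a unital C*-algebra, let H₁ and H₂ be complex Hilbert spaces, and let π₁ : A → B(H₁) and π₂ : A → B(H₂) be unital *-homomorphisms into the bounded operators. Then the following are equivalent: (i) ‖π₁(a)‖ ≤ ‖π₂(a)‖ for all a ∈ A; (ii) ker(π₂) ⊆ ker(π₁); (iii) for every ξ ∈ H₁, the vector state φ_ξ lies in the weak*-closure of the linear span of {φ_ζ : ζ ∈ H₂} inside the continuous dual A*; (iv) for every ξ ∈ H₁, the vector state φ_ξ lies in the weak*-closure of the convex hull of {φ_ζ : ζ ∈ H₂, ‖ζ‖ = ‖ξ‖}. -/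
/-!
The implications (iv) ⇒ (iii) ⇒ (ii) and (iv) ⇒ (i) ⇒ (ii) are soft: each of the properties
`re φ(a* a) ≤ ‖π₂ a‖² ‖ξ‖²` and `φ(a) = 0` defines a weak*-closed convex set of functionals.

For (ii) ⇒ (iv), the Hahn–Banach theorem in the locally convex space `A*` (whose continuous
functionals are the evaluations) reduces the claim to: if `re φ_ζ(b) ≤ u` for all `ζ ∈ H₂` with
`‖ζ‖ = ‖ξ‖`, then `re φ_ξ(b) ≤ u`. Replacing `b` by its real part `c`, the hypothesis says
`π₂ c ≤ t` in operator order with `t = u / ‖ξ‖²`. Then `f = max (· - t) 0` vanishes on the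
spectrum of `π₂ c`, so `π₂ (f c) = f(π₂ c) = 0`, hence `f(π₁ c) = π₁ (f c) = 0`, i.e. `π₁ c ≤ t`,
which evaluated at `ξ` is the conclusion.
-/

open scoped CStarAlgebra InnerProductSpace ComplexStarModule

/-- The vector state `a ↦ ⟪ξ, π a ξ⟫` associated to a `*`-representation `π` of a unital
C*-algebra on a Hilbert space and a vector `ξ`, regarded as an element of the continuous
dual of `A` equipped with the weak-* topology. -/
noncomputable def vecState {A H : Type*} [CStarAlgebra A] [NormedAddCommGroup H]
    [InnerProductSpace ℂ H] [CompleteSpace H] (π : A →⋆ₐ[ℂ] (H →L[ℂ] H)) (ξ : H) :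
    WeakDual ℂ A :=
  ((innerSL ℂ ξ).comp (ContinuousLinearMap.apply ℂ H ξ)).comp
    { toLinearMap := (π : A →ₐ[ℂ] (H →L[ℂ] H)).toLinearMap
      cont := map_continuous π }

namespace WeakDual

variable {E : Type*} [AddCommGroup E] [TopologicalSpace E] [Module ℂ E]

/- Real-scalar instances missing for `WeakDual ℂ E`. The real structure that `Convex ℝ` finds on it
is `Module.complexToReal`, which is not reducibly `WeakDual.instModule' ℝ`, so the instances are
stated for the former. -/
instance instIsScalarTowerRealComplex : IsScalarTower ℝ ℂ (WeakDual ℂ E) :=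
  inferInstanceAs (IsScalarTower ℝ ℂ (E →L[ℂ] ℂ))

instance instContinuousSMulReal :
    @ContinuousSMul ℝ (WeakDual ℂ E) (Module.complexToReal (WeakDual ℂ E)).toSMul _ _ :=
  instContinuousSMul (E := E) ℝ

instance instLocallyConvexSpaceReal :
    @LocallyConvexSpace ℝ (WeakDual ℂ E) _ _ _ (Module.complexToReal (WeakDual ℂ E)) _ :=
  WeakBilin.locallyConvexSpace (B := topDualPairing ℂ E)

theorem convex_setOf_re_apply_le (b : E) (u : ℝ) :
    Convex ℝ {φ : WeakDual ℂ E | (φ b).re ≤ u} :=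
  (convex_halfSpace_re_le u).linear_preimage (((topDualPairing ℂ E).flip b).restrictScalars ℝ)

theorem isClosed_setOf_re_apply_le (b : E) (u : ℝ) :
    IsClosed {φ : WeakDual ℂ E | (φ b).re ≤ u} :=
  isClosed_le (Complex.continuous_re.comp (eval_continuous b)) continuous_const

theorem re_apply_le_of_mem_closure_convexHull {s : Set (WeakDual ℂ E)} {x : WeakDual ℂ E}
    (hx : x ∈ closure (convexHull ℝ s)) {b : E} {u : ℝ} (hs : ∀ φ ∈ s, (φ b).re ≤ u) :
    (x b).re ≤ u := by
  have hsub : convexHull ℝ s ⊆ {φ : WeakDual ℂ E | (φ b).re ≤ u} :=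
    convexHull_min hs (convex_setOf_re_apply_le b u)
  exact closure_minimal hsub (isClosed_setOf_re_apply_le b u) hx

theorem mem_closure_convexHull_of_forall_re_apply_le {s : Set (WeakDual ℂ E)}
    {x : WeakDual ℂ E} (h : ∀ (b : E) (u : ℝ), (∀ φ ∈ s, (φ b).re ≤ u) → (x b).re ≤ u) :
    x ∈ closure (convexHull ℝ s) := by
  by_contra hx
  have hconv : Convex ℝ (closure (convexHull ℝ s)) := (convex_convexHull ℝ s).closure
  obtain ⟨f, u, hsep, hux⟩ :=
    RCLike.geometric_hahn_banach_closed_point (𝕜 := ℂ) hconv isClosed_closure hx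
  obtain ⟨b, rfl⟩ := LinearMap.dualEmbedding_surjective (topDualPairing ℂ E) f
  exact hux.not_ge <| h b u fun φ hφ ↦ (hsep φ (subset_closure (subset_convexHull ℝ s hφ))).le

theorem apply_eq_zero_of_mem_closure_span {s : Set (WeakDual ℂ E)} {x : WeakDual ℂ E} {b : E}
    (hs : ∀ φ ∈ s, φ b = 0) (hx : x ∈ closure (Submodule.span ℂ s : Set (WeakDual ℂ E))) :
    x b = 0 := by
  have hsub : (Submodule.span ℂ s : Set (WeakDual ℂ E)) ⊆ {φ | φ b = 0} :=
    Submodule.span_le (p := LinearMap.ker ((topDualPairing ℂ E).flip b)) |>.2 hs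
  exact closure_minimal hsub (isClosed_eq (eval_continuous b) continuous_const) hx

theorem closure_convexHull_subset_closure_span {s t : Set (WeakDual ℂ E)} (hst : s ⊆ t) :
    closure (convexHull ℝ s) ⊆ closure (Submodule.span ℂ t : Set (WeakDual ℂ E)) :=
  closure_mono <| convexHull_min (hst.trans Submodule.subset_span)
    ((Submodule.span ℂ t).restrictScalars ℝ).convex

end WeakDual

namespace ContinuousLinearMap

variable {H : Type*} [NormedAddCommGroup H] [InnerProductSpace ℂ H]

theorem re_inner_smul_apply_smul (T : H →L[ℂ] H) (s : ℝ) (x : H) :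
    RCLike.re ⟪s • x, T (s • x)⟫_ℂ = s ^ 2 * RCLike.re ⟪x, T x⟫_ℂ := by
  simp only [map_smul_of_tower, inner_smul_left_eq_smul, inner_smul_right_eq_smul, smul_smul,
    RCLike.smul_re]
  ring

theorem re_inner_le_of_forall_norm_eq {T : H →L[ℂ] H} {r u : ℝ} (hr : 0 < r)
    (h : ∀ ζ, ‖ζ‖ = r → RCLike.re ⟪ζ, T ζ⟫_ℂ ≤ u) (x : H) :
    RCLike.re ⟪x, T x⟫_ℂ ≤ u / r ^ 2 * ‖x‖ ^ 2 := by
  rcases eq_or_ne x 0 with rfl | hx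
  · simp
  have hx' : 0 < ‖x‖ := norm_pos_iff.2 hx
  have hrx := h ((r / ‖x‖) • x) (by simp [norm_smul, hr.le, hx'.ne'])
  rw [re_inner_smul_apply_smul, div_pow] at hrx
  rw [div_mul_eq_mul_div, le_div_iff₀ (by positivity)]
  calc RCLike.re ⟪x, T x⟫_ℂ * r ^ 2 = r ^ 2 / ‖x‖ ^ 2 * RCLike.re ⟪x, T x⟫_ℂ * ‖x‖ ^ 2 := by
        field_simp
    _ ≤ u * ‖x‖ ^ 2 := by gcongr

theorem re_inner_algebraMap_sub_apply (T : H →L[ℂ] H) (t : ℝ) (x : H) :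
    RCLike.re ⟪x, (algebraMap ℝ (H →L[ℂ] H) t - T) x⟫_ℂ =
      t * ‖x‖ ^ 2 - RCLike.re ⟪x, T x⟫_ℂ := by
  simp [Algebra.algebraMap_eq_smul_one, inner_smul_right_eq_smul, inner_self_eq_norm_sq_to_K,
    ← Complex.ofReal_pow]

theorem le_algebraMap_iff_re_inner_le [CompleteSpace H] {T : H →L[ℂ] H} (hT : IsSelfAdjoint T)
    (t : ℝ) : T ≤ algebraMap ℝ (H →L[ℂ] H) t ↔ ∀ x, RCLike.re ⟪x, T x⟫_ℂ ≤ t * ‖x‖ ^ 2 := by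
  have hsa : IsSelfAdjoint (algebraMap ℝ (H →L[ℂ] H) t - T) :=
    (IsSelfAdjoint.algebraMap _ (.all t)).sub hT
  rw [le_def, isPositive_def', and_iff_right hsa]
  refine forall_congr' fun x ↦ ?_
  rw [reApplyInnerSelf_apply, inner_re_symm, re_inner_algebraMap_sub_apply, sub_nonneg]

end ContinuousLinearMap

theorem StarAlgHom.map_le_algebraMap_of_ker_le {A B₁ B₂ : Type*} [CStarAlgebra A]
    [CStarAlgebra B₁] [PartialOrder B₁] [StarOrderedRing B₁]
    [CStarAlgebra B₂] [PartialOrder B₂] [StarOrderedRing B₂]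
    (π₁ : A →⋆ₐ[ℂ] B₁) (π₂ : A →⋆ₐ[ℂ] B₂) (hker : ∀ a, π₂ a = 0 → π₁ a = 0) {c : A}
    (hc : IsSelfAdjoint c) {t : ℝ} (h : π₂ c ≤ algebraMap ℝ B₂ t) :
    π₁ c ≤ algebraMap ℝ B₁ t := by
  have hc₁ : IsSelfAdjoint (π₁ c) := hc.map π₁
  have hc₂ : IsSelfAdjoint (π₂ c) := hc.map π₂
  set f : ℝ → ℝ := fun s ↦ max (s - t) 0
  have hf : Continuous f := by fun_prop
  have hf₂ : cfc f (π₂ c) = 0 := by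
    rw [le_algebraMap_iff_spectrum_le] at h
    rw [cfc_congr (g := fun _ ↦ 0) fun x hx ↦ max_eq_right (sub_nonpos.2 (h x hx)),
      cfc_const_zero]
  have hf₁ : cfc f (π₁ c) = 0 := by
    rw [← π₁.map_cfc f c hf.continuousOn (map_continuous π₁)]
    exact hker _ (by rwa [π₂.map_cfc f c hf.continuousOn (map_continuous π₂)])
  have hf₁_le := (cfc_le_algebraMap_iff f 0 (π₁ c)).1 (by simp [hf₁])
  rw [le_algebraMap_iff_spectrum_le]
  exact fun x hx ↦ sub_nonpos.1 ((le_max_left _ _).trans (hf₁_le x hx))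

section VecState

variable {A H : Type*} [CStarAlgebra A] [NormedAddCommGroup H] [InnerProductSpace ℂ H]
  [CompleteSpace H] (π : A →⋆ₐ[ℂ] (H →L[ℂ] H))

theorem vecState_apply (ξ : H) (a : A) : vecState π ξ a = ⟪ξ, π a ξ⟫_ℂ := rfl

theorem vecState_star (ξ : H) (a : A) :
    vecState π ξ (star a) = starRingEnd ℂ (vecState π ξ a) := by
  rw [vecState_apply, vecState_apply, map_star, ContinuousLinearMap.star_eq_adjoint,
    ContinuousLinearMap.adjoint_inner_right, inner_conj_symm]

theorem vecState_realPart (ξ : H) (a : A) : vecState π ξ (ℜ a : A) = (vecState π ξ a).re := by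
  rw [realPart_apply_coe, ← Complex.coe_smul, map_smul, map_add, vecState_star, Complex.add_conj]
  push_cast
  ring

theorem re_inner_realPart_apply (ξ : H) (a : A) :
    RCLike.re ⟪ξ, π (ℜ a : A) ξ⟫_ℂ = (vecState π ξ a).re := by
  rw [← vecState_apply, vecState_realPart, RCLike.re_to_complex, Complex.ofReal_re]

theorem re_vecState_star_mul_self (ξ : H) (a : A) :
    (vecState π ξ (star a * a)).re = ‖π a ξ‖ ^ 2 := by
  rw [vecState_apply, map_mul, map_star, ContinuousLinearMap.star_eq_adjoint, mul_apply_eq_comp,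
    ContinuousLinearMap.adjoint_inner_right, inner_self_eq_norm_sq_to_K]
  norm_cast

theorem forall_vecState_apply_eq_zero_iff (a : A) : (∀ ξ, vecState π ξ a = 0) ↔ π a = 0 := by
  rw [← ContinuousLinearMap.coe_inj, ContinuousLinearMap.toLinearMap_zero,
    ← inner_map_self_eq_zero]
  refine forall_congr' fun ξ ↦ ?_
  rw [vecState_apply, ← inner_conj_symm, map_eq_zero_iff _ (starRingEnd ℂ).injective]
  rfl

end VecState

section TwoRepresentations

variable {A H₁ H₂ : Type*} [CStarAlgebra A]
  [NormedAddCommGroup H₁] [InnerProductSpace ℂ H₁] [CompleteSpace H₁]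
  [NormedAddCommGroup H₂] [InnerProductSpace ℂ H₂] [CompleteSpace H₂]
  (π₁ : A →⋆ₐ[ℂ] (H₁ →L[ℂ] H₁)) (π₂ : A →⋆ₐ[ℂ] (H₂ →L[ℂ] H₂))

theorem re_vecState_le_of_ker_le (hker : ∀ a, π₂ a = 0 → π₁ a = 0) {b : A} {u : ℝ} {ξ : H₁}
    (h : ∀ ζ : H₂, ‖ζ‖ = ‖ξ‖ → (vecState π₂ ζ b).re ≤ u) : (vecState π₁ ξ b).re ≤ u := by
  rcases eq_or_ne ξ 0 with rfl | hξ
  · simpa [vecState_apply] using h 0 (by simp)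
  have hc : IsSelfAdjoint (ℜ b : A) := (ℜ b).prop
  have h₂ : π₂ (ℜ b : A) ≤ algebraMap ℝ (H₂ →L[ℂ] H₂) (u / ‖ξ‖ ^ 2) :=
    (ContinuousLinearMap.le_algebraMap_iff_re_inner_le (hc.map π₂) _).2 <|
      ContinuousLinearMap.re_inner_le_of_forall_norm_eq (norm_pos_iff.2 hξ) fun ζ hζ ↦
        (re_inner_realPart_apply π₂ ζ b).trans_le (h ζ hζ)
  have h₁ := (ContinuousLinearMap.le_algebraMap_iff_re_inner_le (hc.map π₁) _).1
    (π₁.map_le_algebraMap_of_ker_le π₂ hker hc h₂) ξ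
  rwa [re_inner_realPart_apply, div_mul_cancel₀ _ (by positivity)] at h₁

theorem norm_map_le_of_vecState_mem_closure_convexHull (h : ∀ ξ : H₁, vecState π₁ ξ ∈
      closure (convexHull ℝ {φ : WeakDual ℂ A | ∃ ζ : H₂, ‖ζ‖ = ‖ξ‖ ∧ φ = vecState π₂ ζ}))
    (a : A) : ‖π₁ a‖ ≤ ‖π₂ a‖ := by
  refine (π₁ a).opNorm_le_bound (norm_nonneg _) fun ξ ↦ ?_
  have hbound := WeakDual.re_apply_le_of_mem_closure_convexHull (h ξ)
    (b := star a * a) (u := (‖π₂ a‖ * ‖ξ‖) ^ 2) <| by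
      rintro _ ⟨ζ, hζ, rfl⟩
      rw [re_vecState_star_mul_self]
      gcongr
      exact hζ ▸ (π₂ a).le_opNorm ζ
  rw [re_vecState_star_mul_self] at hbound
  exact (pow_le_pow_iff_left₀ (norm_nonneg _) (by positivity) two_ne_zero).1 hbound

end TwoRepresentations

theorem statement0 {A H₁ H₂ : Type*} [CStarAlgebra A]
    [NormedAddCommGroup H₁] [InnerProductSpace ℂ H₁] [CompleteSpace H₁]
    [NormedAddCommGroup H₂] [InnerProductSpace ℂ H₂] [CompleteSpace H₂]
    (π₁ : A →⋆ₐ[ℂ] (H₁ →L[ℂ] H₁)) (π₂ : A →⋆ₐ[ℂ] (H₂ →L[ℂ] H₂)) :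
    List.TFAE
      [ (∀ a : A, ‖π₁ a‖ ≤ ‖π₂ a‖),
        (∀ a : A, π₂ a = 0 → π₁ a = 0),
        (∀ ξ : H₁, vecState π₁ ξ ∈
          closure (Submodule.span ℂ (Set.range (vecState π₂)) : Set (WeakDual ℂ A))),
        (∀ ξ : H₁, vecState π₁ ξ ∈
          closure (convexHull ℝ
            {φ : WeakDual ℂ A | ∃ ζ : H₂, ‖ζ‖ = ‖ξ‖ ∧ φ = vecState π₂ ζ})) ] := by
  tfae_have 1 → 2 := fun h a ha ↦ norm_le_zero_iff.1 (by simpa [ha] using h a)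
  tfae_have 2 → 4 := fun h ξ ↦ WeakDual.mem_closure_convexHull_of_forall_re_apply_le
    fun _ _ hu ↦ re_vecState_le_of_ker_le π₁ π₂ h fun ζ hζ ↦ hu _ ⟨ζ, hζ, rfl⟩
  tfae_have 4 → 3 := fun h ξ ↦ WeakDual.closure_convexHull_subset_closure_span
    (by rintro _ ⟨ζ, -, rfl⟩; exact ⟨ζ, rfl⟩) (h ξ)
  tfae_have 3 → 2 := fun h a ha ↦ (forall_vecState_apply_eq_zero_iff π₁ a).1 fun ξ ↦
    WeakDual.apply_eq_zero_of_mem_closure_span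
      (by rintro _ ⟨ζ, rfl⟩; simp [vecState_apply, ha]) (h ξ)
  tfae_have 4 → 1 := norm_map_le_of_vecState_mem_closure_convexHull π₁ π₂
  tfae_finish
end

section
/- Let A be a unital C*-algebra, let H₁ and H₂ be complex Hilbert spaces, and let π₁ : A → B(H₁) and π₂ : A → B(H₂) be unital *-homomorphisms. Suppose there are subsets B ⊆ A and D ⊆ H₁ such that the closed linear span of B equals A and the closed linear span of {π₁(a)ξ : a ∈ A, ξ ∈ D} equals H₁. Assume that for every ξ ∈ D there is a constant C_ξ ≥ 0 such that for all k and all b₁, …, b_k ∈ B, the tuple (φ_ξ(b₁), …, φ_ξ(b_k)) ∈ ℂᵏ lies in the closure of the convex hull of the set {(φ_ζ(b₁), …, φ_ζ(b_k)) : ζ ∈ H₂, ‖ζ‖ ≤ C_ξ}. Then ‖π₁(a)‖ ≤ ‖π₂(a)‖ for every a ∈ A. -/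
open scoped InnerProductSpace CStarAlgebra

/-!
The convex-hull hypothesis survives the continuous `ℝ`-linear functionals `v ↦ ∑ fᵢ vᵢ`, which
gives the state bound `‖⟪ξ, π₁ x ξ⟫‖ ≤ C² ‖π₂ x‖` on `span B`, hence on all of `A` by continuity.
Applied to `a⋆ a` it becomes `‖π₁ a ξ‖ ≤ C ‖π₂ a‖`. Bounds `‖π₁ a v‖ ≤ K_v ‖π₂ a‖` are stable under
linear combinations and under `v ↦ π₁ c v`, so they hold on a dense subspace. For self-adjoint `x`
and a unit vector `v`, iterating `‖T v‖² ≤ ‖v‖ ‖T² v‖` gives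
`‖π₁ x v‖ ^ 2ⁿ ≤ ‖π₁ (x ^ 2ⁿ) v‖ ≤ K_v ‖π₂ x‖ ^ 2ⁿ`, and letting `n → ∞` removes `K_v`.
The C⋆-identity then passes from `a⋆ a` to `a`.
-/

lemma norm_le_of_mem_closure_convexHull {E F : Type*} [AddCommGroup E] [Module ℝ E]
    [TopologicalSpace E] [SeminormedAddCommGroup F] [NormedSpace ℝ F] (L : E →L[ℝ] F)
    {s : Set E} {r : ℝ} (hs : ∀ w ∈ s, ‖L w‖ ≤ r) {v : E} (hv : v ∈ closure (convexHull ℝ s)) :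
    ‖L v‖ ≤ r := by
  have hconv : Convex ℝ (L ⁻¹' Metric.closedBall 0 r) :=
    (convex_closedBall 0 r).linear_preimage L.toLinearMap
  have hclosed : IsClosed (L ⁻¹' Metric.closedBall 0 r) :=
    Metric.isClosed_closedBall.preimage L.continuous
  have hsub : s ⊆ L ⁻¹' Metric.closedBall 0 r := fun w hw => by simpa using hs w hw
  simpa using closure_minimal (convexHull_min hsub hconv) hclosed hv

lemma le_of_forall_pow_two_pow_le_mul {a b K : ℝ} (hb : 0 ≤ b)
    (h : ∀ n : ℕ, a ^ 2 ^ n ≤ K * b ^ 2 ^ n) : a ≤ b := by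
  by_contra! hba
  rcases hb.eq_or_lt with rfl | hb
  · linarith [show a ≤ 0 by simpa using h 0]
  · obtain ⟨m, hm⟩ := pow_unbounded_of_one_lt K ((one_lt_div hb).mpr hba)
    have hK : (a / b) ^ 2 ^ m ≤ K := by
      rw [div_pow, div_le_iff₀ (by positivity)]
      exact h m
    have : (a / b) ^ m ≤ (a / b) ^ 2 ^ m :=
      pow_le_pow_right₀ ((one_lt_div hb).mpr hba).le Nat.lt_two_pow_self.le
    linarith

namespace IsSelfAdjoint

variable {H : Type*} [NormedAddCommGroup H] [InnerProductSpace ℂ H] [CompleteSpace H]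
  {T : H →L[ℂ] H}

lemma norm_apply_sq_le (hT : IsSelfAdjoint T) (v : H) : ‖T v‖ ^ 2 ≤ ‖v‖ * ‖T (T v)‖ := by
  have h : ⟪T v, T v⟫_ℂ = ⟪v, T (T v)⟫_ℂ := by
    rw [← ContinuousLinearMap.adjoint_inner_right, hT.adjoint_eq]
  calc ‖T v‖ ^ 2 = ‖⟪T v, T v⟫_ℂ‖ := by rw [inner_self_eq_norm_sq_to_K]; simp
    _ = ‖⟪v, T (T v)⟫_ℂ‖ := by rw [h]
    _ ≤ ‖v‖ * ‖T (T v)‖ := norm_inner_le_norm _ _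

lemma norm_apply_pow_two_pow_le (hT : IsSelfAdjoint T) {v : H} (hv : ‖v‖ ≤ 1) (n : ℕ) :
    ‖T v‖ ^ 2 ^ n ≤ ‖(T ^ 2 ^ n) v‖ := by
  induction n with
  | zero => simp
  | succ n ih =>
    set S := T ^ 2 ^ n
    have hS : S (S v) = (T ^ 2 ^ (n + 1)) v := by
      rw [pow_succ, pow_mul, sq]
      rfl
    calc ‖T v‖ ^ 2 ^ (n + 1) = (‖T v‖ ^ 2 ^ n) ^ 2 := by rw [pow_succ, pow_mul]
      _ ≤ ‖S v‖ ^ 2 := by gcongr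
      _ ≤ ‖v‖ * ‖S (S v)‖ := (hT.pow _).norm_apply_sq_le v
      _ ≤ ‖(T ^ 2 ^ (n + 1)) v‖ := by
        rw [hS]
        exact mul_le_of_le_one_left (norm_nonneg _) hv

lemma norm_apply_le_of_forall_norm_pow_apply_le (hT : IsSelfAdjoint T) {v : H} {K r : ℝ}
    (hr : 0 ≤ r) (h : ∀ n : ℕ, ‖(T ^ 2 ^ n) v‖ ≤ K * r ^ 2 ^ n) : ‖T v‖ ≤ r * ‖v‖ := by
  rcases eq_or_ne v 0 with rfl | hv
  · simp
  have hv : 0 < ‖v‖ := norm_pos_iff.mpr hv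
  set u := ((‖v‖⁻¹ : ℝ) : ℂ) • v
  have hu : ‖u‖ ≤ 1 := by simp [u, norm_smul, hv.ne']
  have hTu : ‖T u‖ ≤ r := by
    refine le_of_forall_pow_two_pow_le_mul hr (K := ‖v‖⁻¹ * K) fun n => ?_
    calc ‖T u‖ ^ 2 ^ n ≤ ‖(T ^ 2 ^ n) u‖ := hT.norm_apply_pow_two_pow_le hu n
      _ = ‖v‖⁻¹ * ‖(T ^ 2 ^ n) v‖ := by rw [map_smul, norm_smul]; simp
      _ ≤ ‖v‖⁻¹ * K * r ^ 2 ^ n := by rw [mul_assoc]; gcongr; exact h n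
  rw [map_smul, norm_smul] at hTu
  simpa [hv.ne', inv_mul_le_iff₀ hv, mul_comm] using hTu

end IsSelfAdjoint

lemma ContinuousLinearMap.norm_inner_apply_self_le {𝕜 E : Type*} [RCLike 𝕜]
    [NormedAddCommGroup E] [InnerProductSpace 𝕜 E] (T : E →L[𝕜] E) (x : E) :
    ‖⟪x, T x⟫_𝕜‖ ≤ ‖x‖ ^ 2 * ‖T‖ :=
  calc ‖⟪x, T x⟫_𝕜‖ ≤ ‖x‖ * ‖T x‖ := norm_inner_le_norm _ _
    _ ≤ ‖x‖ * (‖T‖ * ‖x‖) := by gcongr; exact T.le_opNorm x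
    _ = ‖x‖ ^ 2 * ‖T‖ := by ring

section Representation

variable {A H H₁ H₂ : Type*} [CStarAlgebra A]
  [NormedAddCommGroup H] [InnerProductSpace ℂ H] [CompleteSpace H]
  [NormedAddCommGroup H₁] [InnerProductSpace ℂ H₁] [CompleteSpace H₁]
  [NormedAddCommGroup H₂] [InnerProductSpace ℂ H₂] [CompleteSpace H₂]

lemma inner_map_sum_smul_apply (π : A →⋆ₐ[ℂ] (H →L[ℂ] H)) {n : ℕ} (f : Fin n → ℂ)
    (g : Fin n → A) (ζ : H) : ⟪ζ, π (∑ i, f i • g i) ζ⟫_ℂ = ∑ i, f i * ⟪ζ, π (g i) ζ⟫_ℂ := by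
  simp

lemma inner_map_star_mul_self_apply (π : A →⋆ₐ[ℂ] (H →L[ℂ] H)) (a : A) (ξ : H) :
    ⟪ξ, π (star a * a) ξ⟫_ℂ = (‖π a ξ‖ ^ 2 : ℝ) := by
  rw [map_mul, map_star, mul_apply_eq_comp, ContinuousLinearMap.star_eq_adjoint,
    ContinuousLinearMap.adjoint_inner_right, inner_self_eq_norm_sq_to_K]
  norm_cast

variable {π₁ : A →⋆ₐ[ℂ] (H₁ →L[ℂ] H₁)} {π₂ : A →⋆ₐ[ℂ] (H₂ →L[ℂ] H₂)}

lemma norm_inner_map_le_of_mem_span_of_mem_closure_convexHull {B : Set A} {ξ : H₁} {C : ℝ}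
    (hξ : ∀ (k : ℕ) (b : Fin k → A), (∀ j, b j ∈ B) →
      (fun j => ⟪ξ, π₁ (b j) ξ⟫_ℂ) ∈
        closure (convexHull ℝ
          {v : Fin k → ℂ | ∃ ζ : H₂, ‖ζ‖ ≤ C ∧ v = fun j => ⟪ζ, π₂ (b j) ζ⟫_ℂ}))
    {x : A} (hx : x ∈ Submodule.span ℂ B) : ‖⟪ξ, π₁ x ξ⟫_ℂ‖ ≤ C ^ 2 * ‖π₂ x‖ := by
  obtain ⟨n, f, g, rfl⟩ := Submodule.mem_span_set'.mp hx
  let L : (Fin n → ℂ) →L[ℝ] ℂ :=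
    (∑ i, f i • ContinuousLinearMap.proj i : (Fin n → ℂ) →L[ℂ] ℂ).restrictScalars ℝ
  have hL (w : Fin n → ℂ) : L w = ∑ i, f i * w i := by simp [L]
  have := norm_le_of_mem_closure_convexHull L (r := C ^ 2 * ‖π₂ (∑ i, f i • (g i : A))‖)
    ?_ (hξ n (fun i => g i) fun i => (g i).2)
  · rwa [hL, ← inner_map_sum_smul_apply] at this
  rintro _ ⟨ζ, hζ, rfl⟩
  rw [hL, ← inner_map_sum_smul_apply]
  exact ((π₂ _).norm_inner_apply_self_le ζ).trans (by gcongr)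

lemma norm_map_apply_le_of_norm_inner_map_le {ξ : H₁} {C : ℝ} (hC : 0 ≤ C)
    (h : ∀ x, ‖⟪ξ, π₁ x ξ⟫_ℂ‖ ≤ C ^ 2 * ‖π₂ x‖) (a : A) : ‖π₁ a ξ‖ ≤ C * ‖π₂ a‖ := by
  have h := h (star a * a)
  rw [inner_map_star_mul_self_apply, map_mul, map_star, CStarRing.norm_star_mul_self, ← sq,
    ← mul_pow, Complex.norm_real, Real.norm_of_nonneg (by positivity)] at h
  exact (pow_le_pow_iff_left₀ (norm_nonneg _) (by positivity) two_ne_zero).mp h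

variable (π₁ π₂) in
def dominatedSubmodule : Submodule ℂ H₁ where
  carrier := {v | ∃ K : ℝ, 0 ≤ K ∧ ∀ a, ‖π₁ a v‖ ≤ K * ‖π₂ a‖}
  zero_mem' := ⟨0, le_rfl, by simp⟩
  add_mem' := by
    rintro u w ⟨K, hK, hKu⟩ ⟨L, hL, hLw⟩
    refine ⟨K + L, add_nonneg hK hL, fun a => ?_⟩
    calc ‖π₁ a (u + w)‖ ≤ ‖π₁ a u‖ + ‖π₁ a w‖ := by rw [map_add]; exact norm_add_le _ _
      _ ≤ (K + L) * ‖π₂ a‖ := by linarith [hKu a, hLw a]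
  smul_mem' := by
    rintro c v ⟨K, hK, hKv⟩
    refine ⟨‖c‖ * K, by positivity, fun a => ?_⟩
    rw [map_smul, norm_smul, mul_assoc]
    exact mul_le_mul_of_nonneg_left (hKv a) (norm_nonneg c)

lemma map_apply_mem_dominatedSubmodule {v : H₁} (hv : v ∈ dominatedSubmodule π₁ π₂) (c : A) :
    π₁ c v ∈ dominatedSubmodule π₁ π₂ := by
  obtain ⟨K, hK, hKv⟩ := hv
  refine ⟨K * ‖π₂ c‖, by positivity, fun a => ?_⟩
  calc ‖π₁ a (π₁ c v)‖ = ‖π₁ (a * c) v‖ := by rw [map_mul, mul_apply_eq_comp]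
    _ ≤ K * ‖π₂ a * π₂ c‖ := by rw [← map_mul]; exact hKv _
    _ ≤ K * (‖π₂ a‖ * ‖π₂ c‖) := by gcongr; exact norm_mul_le _ _
    _ = K * ‖π₂ c‖ * ‖π₂ a‖ := by ring

lemma mem_dominatedSubmodule_of_mem_closure_convexHull {B : Set A}
    (hB : Dense (Submodule.span ℂ B : Set A)) {ξ : H₁} {C : ℝ} (hC : 0 ≤ C)
    (hξ : ∀ (k : ℕ) (b : Fin k → A), (∀ j, b j ∈ B) →
      (fun j => ⟪ξ, π₁ (b j) ξ⟫_ℂ) ∈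
        closure (convexHull ℝ
          {v : Fin k → ℂ | ∃ ζ : H₂, ‖ζ‖ ≤ C ∧ v = fun j => ⟪ζ, π₂ (b j) ζ⟫_ℂ})) :
    ξ ∈ dominatedSubmodule π₁ π₂ := by
  refine ⟨C, hC, norm_map_apply_le_of_norm_inner_map_le hC fun x => ?_⟩
  exact Dense.induction hB
    (fun x hx => norm_inner_map_le_of_mem_span_of_mem_closure_convexHull hξ hx)
    (isClosed_le (by fun_prop) (by fun_prop)) x

lemma IsSelfAdjoint.norm_map_le_of_dense_dominatedSubmodule
    (hdense : Dense (dominatedSubmodule π₁ π₂ : Set H₁)) {x : A} (hx : IsSelfAdjoint x) :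
    ‖π₁ x‖ ≤ ‖π₂ x‖ := by
  refine (π₁ x).opNorm_le_bound (norm_nonneg _) fun v => ?_
  refine Dense.induction hdense (fun v hv => ?_) (isClosed_le (by fun_prop) (by fun_prop)) v
  obtain ⟨K, -, hKv⟩ := hv
  refine (hx.map π₁).norm_apply_le_of_forall_norm_pow_apply_le (K := K) (norm_nonneg _)
    fun n => ?_
  rw [← map_pow, ← (hx.map π₂).norm_pow_two_pow, ← map_pow]
  exact hKv _

lemma norm_map_le_of_dense_dominatedSubmodule
    (hdense : Dense (dominatedSubmodule π₁ π₂ : Set H₁)) (a : A) : ‖π₁ a‖ ≤ ‖π₂ a‖ := by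
  have h := (IsSelfAdjoint.star_mul_self a).norm_map_le_of_dense_dominatedSubmodule hdense
  rwa [map_mul, map_mul, map_star, map_star, CStarRing.norm_star_mul_self,
    CStarRing.norm_star_mul_self, ← mul_self_le_mul_self_iff (norm_nonneg _) (norm_nonneg _)] at h

end Representation

theorem statement2 {A H₁ H₂ : Type*} [CStarAlgebra A]
    [NormedAddCommGroup H₁] [InnerProductSpace ℂ H₁] [CompleteSpace H₁]
    [NormedAddCommGroup H₂] [InnerProductSpace ℂ H₂] [CompleteSpace H₂]
    (π₁ : A →⋆ₐ[ℂ] (H₁ →L[ℂ] H₁)) (π₂ : A →⋆ₐ[ℂ] (H₂ →L[ℂ] H₂))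
    (B : Set A) (D : Set H₁)
    (hB : closure (Submodule.span ℂ B : Set A) = Set.univ)
    (hD : closure (Submodule.span ℂ {v : H₁ | ∃ a : A, ∃ ξ ∈ D, v = π₁ a ξ} : Set H₁)
            = Set.univ)
    (hmain : ∀ ξ ∈ D, ∃ C : ℝ, 0 ≤ C ∧ ∀ (k : ℕ) (b : Fin k → A), (∀ j, b j ∈ B) →
      (fun j => ⟪ξ, π₁ (b j) ξ⟫_ℂ) ∈
        closure (convexHull ℝ
          {v : Fin k → ℂ | ∃ ζ : H₂, ‖ζ‖ ≤ C ∧ v = fun j => ⟪ζ, π₂ (b j) ζ⟫_ℂ})) :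
    ∀ a : A, ‖π₁ a‖ ≤ ‖π₂ a‖ := by
  have hD_le : Submodule.span ℂ {v : H₁ | ∃ a : A, ∃ ξ ∈ D, v = π₁ a ξ}
      ≤ dominatedSubmodule π₁ π₂ := by
    refine Submodule.span_le.mpr ?_
    rintro _ ⟨c, ξ, hξ, rfl⟩
    obtain ⟨C, hC, hξC⟩ := hmain ξ hξ
    exact map_apply_mem_dominatedSubmodule
      (mem_dominatedSubmodule_of_mem_closure_convexHull (dense_iff_closure_eq.mpr hB) hC hξC) c
  exact norm_map_le_of_dense_dominatedSubmodule ((dense_iff_closure_eq.mpr hD).mono hD_le)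
end
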